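/- For every function m: ℝ² → ℝ, the function v₁(x, y) := m(y)·ψ(x + β(y₁ + y₂)) + R₁(x, y) satisfies, for all x ∈ ℝ and y = (y₁, y₂) ∈ ℝ², the nonhomogeneous equation (σ²/2)·∂ₓₓv₁(x, y) + k(μ − β(y₁ + y₂) − x)·∂ₓv₁(x, y) − ρ·v₁(x, y) + x·y₁ = 0 (derivatives taken in x only). In particular (taking m ≡ 0) the no-installation profit R₁ is a particular solution of this equation. -/

import Mathlib

/-!
Write `J c b = ∫₀^∞ t^c exp(-t²/2 + b t) dt`, so that `ψ(x) = J (ρ/k - 1) (q (x - μ)) / Γ(ρ/k)`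
with `q = √(2k)/σ`. Differentiating under the integral sign in the tilt `b` raises the power of
`t` by one, and integrating `d/dt (t^a exp(-t²/2 + b t))` over `(0, ∞)` gives the three-term
recurrence `J (a+1) b = b J a b + a J (a-1) b`; since `q² σ²/2 = k` and `k (ρ/k) = ρ`, this is the
resolvent equation for `ψ`. `R₁` is affine in `x`, and the shift by `β(y₁ + y₂)` turns the drift
`k(μ - x)` into `k(μ - β(y₁ + y₂) - x)`, so the claim follows by linearity.
-/

noncomputable section

open MeasureTheory

/-- The increasing fundamental solution `ψ` of the Ornstein–Uhlenbeck resolvent equation. -/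
def psi (ρ k σ μ : ℝ) (x : ℝ) : ℝ :=
  (1 / Real.Gamma (ρ / k)) *
    ∫ t in Set.Ioi (0 : ℝ),
      t ^ (ρ / k - 1) * Real.exp (-t ^ 2 / 2 + ((x - μ) * Real.sqrt (2 * k) / σ) * t)

/-- The no-installation expected profit of player 1:
`R₁(x, y₁, y₂) = y₁ (xρ + μk − βk(y₁ + y₂))/(ρ(ρ + k))`. -/
def R1 (ρ k β μ x y₁ y₂ : ℝ) : ℝ :=
  y₁ * (x * ρ + μ * k - β * k * (y₁ + y₂)) / (ρ * (ρ + k))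

/-- `R̃₁(x, y) = x/(ρ+k) + (μk − β(ρ+k)(y₁ + y₂) − βk y₁)/(ρ(ρ+k))`. -/
def R1tilde (ρ k β μ x y₁ y₂ : ℝ) : ℝ :=
  x / (ρ + k) + (μ * k - β * (ρ + k) * (y₁ + y₂) - β * k * y₁) / (ρ * (ρ + k))

open Real Set Filter Topology

def tiltedGaussMoment (c b : ℝ) : ℝ :=
  ∫ t in Ioi 0, t ^ c * exp (-t ^ 2 / 2 + b * t)

section tiltedGaussMoment

lemma exp_neg_sq_div_two_add_mul_le (b t : ℝ) :
    exp (-t ^ 2 / 2 + b * t) ≤ exp (b ^ 2) * exp (-(1 / 4) * t ^ 2) := by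
  rw [← exp_add]
  exact exp_le_exp.2 (by nlinarith [sq_nonneg (t / 2 - b)])

lemma continuousOn_rpow_mul_exp_neg_sq_div_two_add_mul (c b : ℝ) :
    ContinuousOn (fun t : ℝ => t ^ c * exp (-t ^ 2 / 2 + b * t)) (Ioi 0) := by
  refine ContinuousOn.mul (fun t ht => ?_) (by fun_prop)
  exact (continuousAt_rpow_const t c (Or.inl (ne_of_gt ht))).continuousWithinAt

lemma integrableOn_rpow_mul_exp_neg_sq_div_two_add_mul {c : ℝ} (hc : -1 < c) (b : ℝ) :
    IntegrableOn (fun t : ℝ => t ^ c * exp (-t ^ 2 / 2 + b * t)) (Ioi 0) := by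
  refine Integrable.mono'
    ((integrableOn_rpow_mul_exp_neg_mul_sq (by norm_num : (0 : ℝ) < 1 / 4) hc).const_mul
      (exp (b ^ 2)))
    ((continuousOn_rpow_mul_exp_neg_sq_div_two_add_mul c b).aestronglyMeasurable
      measurableSet_Ioi) ?_
  filter_upwards [ae_restrict_mem measurableSet_Ioi] with t (ht : 0 < t)
  have htc : 0 ≤ t ^ c := rpow_nonneg ht.le c
  rw [norm_of_nonneg (mul_nonneg htc (exp_pos _).le), mul_left_comm]
  exact mul_le_mul_of_nonneg_left (exp_neg_sq_div_two_add_mul_le b t) htc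

lemma hasDerivAt_tiltedGaussMoment {c : ℝ} (hc : -1 < c) (b₀ : ℝ) :
    HasDerivAt (tiltedGaussMoment c) (tiltedGaussMoment (c + 1) b₀) b₀ := by
  refine (hasDerivAt_integral_of_dominated_loc_of_deriv_le
    (F' := fun b t => t ^ (c + 1) * exp (-t ^ 2 / 2 + b * t))
    (bound := fun t => t ^ (c + 1) * exp (-t ^ 2 / 2 + (|b₀| + 1) * t))
    (Metric.ball_mem_nhds b₀ one_pos)
    (Eventually.of_forall fun b =>
      (continuousOn_rpow_mul_exp_neg_sq_div_two_add_mul c b).aestronglyMeasurable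
        measurableSet_Ioi)
    (integrableOn_rpow_mul_exp_neg_sq_div_two_add_mul hc b₀)
    ((continuousOn_rpow_mul_exp_neg_sq_div_two_add_mul (c + 1) b₀).aestronglyMeasurable
      measurableSet_Ioi)
    ?_ (integrableOn_rpow_mul_exp_neg_sq_div_two_add_mul (by linarith) (|b₀| + 1)) ?_).2
  · filter_upwards [ae_restrict_mem measurableSet_Ioi] with t (ht : 0 < t) b hb
    have htc : 0 ≤ t ^ (c + 1) := rpow_nonneg ht.le _
    rw [norm_of_nonneg (mul_nonneg htc (exp_pos _).le)]
    have hb' : b ≤ |b₀| + 1 := by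
      have := (abs_lt.1 (mem_ball_iff_norm.1 hb)).2
      linarith [le_abs_self b₀]
    gcongr
  · filter_upwards [ae_restrict_mem measurableSet_Ioi] with t (ht : 0 < t) b _
    have hexp : HasDerivAt (fun b : ℝ => -t ^ 2 / 2 + b * t) t b := by
      simpa using ((hasDerivAt_id b).mul_const t).const_add (-t ^ 2 / 2)
    refine (hexp.exp.const_mul (t ^ c)).congr_deriv ?_
    rw [rpow_add_one ht.ne']
    ring

lemma tendsto_rpow_mul_exp_neg_sq_div_two_add_mul_atTop (a b : ℝ) :
    Tendsto (fun t : ℝ => t ^ a * exp (-t ^ 2 / 2 + b * t)) atTop (𝓝 0) := by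
  have hdecay : Tendsto (fun t : ℝ => exp (b ^ 2) * (t ^ a * exp (-(1 / 4) * t ^ 2)))
      atTop (𝓝 0) := by
    simpa using ((rpow_mul_exp_neg_mul_sq_isLittleO_exp_neg (by norm_num) a).tendsto_zero_of_tendsto
      (tendsto_exp_atBot.comp (tendsto_id.const_mul_atTop_of_neg (by norm_num)))).const_mul
      (exp (b ^ 2))
  refine tendsto_of_tendsto_of_tendsto_of_le_of_le' tendsto_const_nhds hdecay ?_ ?_ <;>
    filter_upwards [eventually_ge_atTop (0 : ℝ)] with t ht
  · exact mul_nonneg (rpow_nonneg ht _) (exp_pos _).le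
  · rw [mul_left_comm]
    exact mul_le_mul_of_nonneg_left (exp_neg_sq_div_two_add_mul_le b t) (rpow_nonneg ht a)

lemma tiltedGaussMoment_add_one {a : ℝ} (ha : 0 < a) (b : ℝ) :
    tiltedGaussMoment (a + 1) b = b * tiltedGaussMoment a b + a * tiltedGaussMoment (a - 1) b := by
  set e : ℝ → ℝ := fun t => exp (-t ^ 2 / 2 + b * t)
  have hint (c : ℝ) (hc : -1 < c) : IntegrableOn (fun t => t ^ c * e t) (Ioi 0) :=
    integrableOn_rpow_mul_exp_neg_sq_div_two_add_mul hc b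
  have hderiv : ∀ t ∈ Ioi (0 : ℝ), HasDerivAt (fun t => t ^ a * e t)
      (a * (t ^ (a - 1) * e t) + b * (t ^ a * e t) - t ^ (a + 1) * e t) t := by
    intro t (ht : 0 < t)
    have hquad : HasDerivAt (fun s : ℝ => -s ^ 2 / 2 + b * s) (b - t) t := by
      refine ((((hasDerivAt_pow 2 t).neg).div_const 2).add
        ((hasDerivAt_id t).const_mul b)).congr_deriv ?_
      push_cast; ring
    refine ((hasDerivAt_rpow_const (p := a) (Or.inl ht.ne')).mul hquad.exp).congr_deriv ?_
    rw [rpow_add_one ht.ne']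
    ring
  have hcont : ContinuousWithinAt (fun t => t ^ a * e t) (Ici 0) 0 :=
    ((continuousAt_rpow_const 0 a (Or.inr ha.le)).mul (by fun_prop)).continuousWithinAt
  have hlow := (hint (a - 1) (by linarith)).const_mul a
  have hmid := (hint a (by linarith)).const_mul b
  have hhigh := hint (a + 1) (by linarith)
  have hibp := integral_Ioi_of_hasDerivAt_of_tendsto hcont hderiv ((hlow.add hmid).sub hhigh)
    (tendsto_rpow_mul_exp_neg_sq_div_two_add_mul_atTop a b)
  rw [integral_sub (f := fun t => a * (t ^ (a - 1) * e t) + b * (t ^ a * e t)) (hlow.add hmid)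
    hhigh, integral_add hlow hmid, integral_const_mul, integral_const_mul, zero_rpow ha.ne',
    zero_mul, sub_zero] at hibp
  unfold tiltedGaussMoment
  linarith

lemma hasDerivAt_tiltedGaussMoment_comp {c : ℝ} (hc : -1 < c) (C μ p σ x : ℝ) :
    HasDerivAt (fun x => C * tiltedGaussMoment c ((x - μ) * p / σ))
      (C * (p / σ) * tiltedGaussMoment (c + 1) ((x - μ) * p / σ)) x := by
  have hlin : HasDerivAt (fun x : ℝ => (x - μ) * p / σ) (p / σ) x := by
    simpa using (((hasDerivAt_id x).sub_const μ).mul_const p).div_const σ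
  exact (((hasDerivAt_tiltedGaussMoment hc _).comp x hlin).const_mul C).congr_deriv (by ring)

end tiltedGaussMoment

section psi

variable {ρ k : ℝ} (σ μ : ℝ)

lemma psi_eq_tiltedGaussMoment (x : ℝ) :
    psi ρ k σ μ x = 1 / Gamma (ρ / k) * tiltedGaussMoment (ρ / k - 1) ((x - μ) * √(2 * k) / σ) :=
  rfl

lemma hasDerivAt_psi (h : 0 < ρ / k) (x : ℝ) :
    HasDerivAt (psi ρ k σ μ) (1 / Gamma (ρ / k) * (√(2 * k) / σ) *
      tiltedGaussMoment (ρ / k) ((x - μ) * √(2 * k) / σ)) x := by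
  have := hasDerivAt_tiltedGaussMoment_comp (c := ρ / k - 1) (by linarith) (1 / Gamma (ρ / k)) μ
    (√(2 * k)) σ x
  rwa [sub_add_cancel] at this

lemma hasDerivAt_deriv_psi (h : 0 < ρ / k) (x : ℝ) :
    HasDerivAt (deriv (psi ρ k σ μ)) (1 / Gamma (ρ / k) * (√(2 * k) / σ) * (√(2 * k) / σ) *
      tiltedGaussMoment (ρ / k + 1) ((x - μ) * √(2 * k) / σ)) x := by
  rw [show deriv (psi ρ k σ μ) = _ from funext fun x => (hasDerivAt_psi σ μ h x).deriv]
  exact hasDerivAt_tiltedGaussMoment_comp (by linarith) _ μ _ σ x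

lemma psi_ode (hρ : 0 < ρ) (hk : 0 < k) (hσ : σ ≠ 0) (x : ℝ) :
    σ ^ 2 / 2 * deriv (deriv (psi ρ k σ μ)) x + k * (μ - x) * deriv (psi ρ k σ μ) x
      - ρ * psi ρ k σ μ x = 0 := by
  have h : 0 < ρ / k := div_pos hρ hk
  have hq : √(2 * k) / σ * (√(2 * k) / σ) = 2 * k / σ ^ 2 := by
    rw [div_mul_div_comm, mul_self_sqrt (by positivity), sq]
  have hσk : σ ^ 2 / 2 * (2 * k / σ ^ 2) = k := by field_simp
  have hkρ : k * (ρ / k) = ρ := by field_simp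
  rw [(hasDerivAt_deriv_psi σ μ h x).deriv, (hasDerivAt_psi σ μ h x).deriv,
    psi_eq_tiltedGaussMoment, tiltedGaussMoment_add_one h]
  set C := 1 / Gamma (ρ / k)
  set b := (x - μ) * √(2 * k) / σ
  set J₀ := tiltedGaussMoment (ρ / k - 1) b
  set J₁ := tiltedGaussMoment (ρ / k) b
  linear_combination (σ ^ 2 / 2 * C * (b * J₁ + ρ / k * J₀)) * hq
    + C * (b * J₁ + ρ / k * J₀) * hσk + C * J₀ * hkρ

end psi

section R1

variable (ρ k β μ y₁ y₂ : ℝ)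

lemma hasDerivAt_R1 (x : ℝ) :
    HasDerivAt (fun z => R1 ρ k β μ z y₁ y₂) (y₁ * ρ / (ρ * (ρ + k))) x :=
  (((((hasDerivAt_id x).mul_const ρ).add_const (μ * k)).sub_const (β * k * (y₁ + y₂))).const_mul
    y₁).div_const (ρ * (ρ + k)) |>.congr_deriv (by ring)

lemma deriv_R1 : deriv (fun z => R1 ρ k β μ z y₁ y₂) = fun _ => y₁ * ρ / (ρ * (ρ + k)) :=
  funext fun x => (hasDerivAt_R1 ρ k β μ y₁ y₂ x).deriv

lemma R1_ode (hρ : ρ ≠ 0) (hρk : ρ + k ≠ 0) (σ x : ℝ) :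
    σ ^ 2 / 2 * deriv (deriv (fun z => R1 ρ k β μ z y₁ y₂)) x
      + k * (μ - β * (y₁ + y₂) - x) * deriv (fun z => R1 ρ k β μ z y₁ y₂) x
      - ρ * R1 ρ k β μ x y₁ y₂ + x * y₁ = 0 := by
  rw [deriv_R1, deriv_const, R1]
  field_simp
  ring

end R1

lemma deriv_const_mul_comp_add_add {f g : ℝ → ℝ} (hf : Differentiable ℝ f)
    (hg : Differentiable ℝ g) (M c : ℝ) :
    deriv (fun z => M * f (z + c) + g z) = fun z => M * deriv f (z + c) + deriv g z := by
  ext z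
  have hfc : DifferentiableAt ℝ (fun z => f (z + c)) z := differentiableAt_comp_add_const.2 (hf _)
  rw [deriv_fun_add (hfc.const_mul M) (hg z), deriv_const_mul _ hfc, deriv_comp_add_const]

theorem stmt12_general (ρ k σ β μ : ℝ) (hρ : 0 < ρ) (hk : 0 < k) (hσ : 0 < σ)
    (m : ℝ × ℝ → ℝ) (y₁ y₂ x : ℝ) :
    (σ ^ 2 / 2 *
        deriv (deriv (fun z : ℝ =>
          m (y₁, y₂) * psi ρ k σ μ (z + β * (y₁ + y₂)) + R1 ρ k β μ z y₁ y₂)) x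
      + k * (μ - β * (y₁ + y₂) - x) *
        deriv (fun z : ℝ =>
          m (y₁, y₂) * psi ρ k σ μ (z + β * (y₁ + y₂)) + R1 ρ k β μ z y₁ y₂) x
      - ρ * (m (y₁, y₂) * psi ρ k σ μ (x + β * (y₁ + y₂)) + R1 ρ k β μ x y₁ y₂)
      + x * y₁ = 0) ∧
    (σ ^ 2 / 2 * deriv (deriv (fun z : ℝ => R1 ρ k β μ z y₁ y₂)) x
      + k * (μ - β * (y₁ + y₂) - x) * deriv (fun z : ℝ => R1 ρ k β μ z y₁ y₂) x
      - ρ * R1 ρ k β μ x y₁ y₂ + x * y₁ = 0) := by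
  have hρk : 0 < ρ / k := div_pos hρ hk
  have hR := R1_ode ρ k β μ y₁ y₂ hρ.ne' (add_pos hρ hk).ne' σ x
  have hψ := psi_ode σ μ hρ hk hσ.ne' (x + β * (y₁ + y₂))
  refine ⟨?_, hR⟩
  rw [deriv_const_mul_comp_add_add (fun x => (hasDerivAt_psi σ μ hρk x).differentiableAt)
      (fun x => (hasDerivAt_R1 ρ k β μ y₁ y₂ x).differentiableAt),
    deriv_const_mul_comp_add_add (fun x => (hasDerivAt_deriv_psi σ μ hρk x).differentiableAt)
      (by rw [deriv_R1]; exact differentiable_const _)]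
  linear_combination m (y₁, y₂) * hψ + hR

/-- For any `m : ℝ² → ℝ`, the function `v₁(x, y) = m(y)ψ(x + β(y₁ + y₂)) + R₁(x, y)`
satisfies `(σ²/2)∂ₓₓv₁ + k(μ − β(y₁+y₂) − x)∂ₓv₁ − ρv₁ + xy₁ = 0` (derivatives in `x`);
in particular (`m ≡ 0`) `R₁` is a particular solution of this equation. -/
theorem stmt12 (ρ k σ β μ : ℝ) (hρ : 0 < ρ) (hk : 0 < k) (hσ : 0 < σ) (hβ : 0 < β)
    (m : ℝ × ℝ → ℝ) (y₁ y₂ x : ℝ) :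
    (σ ^ 2 / 2 *
        deriv (deriv (fun z : ℝ =>
          m (y₁, y₂) * psi ρ k σ μ (z + β * (y₁ + y₂)) + R1 ρ k β μ z y₁ y₂)) x
      + k * (μ - β * (y₁ + y₂) - x) *
        deriv (fun z : ℝ =>
          m (y₁, y₂) * psi ρ k σ μ (z + β * (y₁ + y₂)) + R1 ρ k β μ z y₁ y₂) x
      - ρ * (m (y₁, y₂) * psi ρ k σ μ (x + β * (y₁ + y₂)) + R1 ρ k β μ x y₁ y₂)
      + x * y₁ = 0) ∧
    (σ ^ 2 / 2 * deriv (deriv (fun z : ℝ => R1 ρ k β μ z y₁ y₂)) x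
      + k * (μ - β * (y₁ + y₂) - x) * deriv (fun z : ℝ => R1 ρ k β μ z y₁ y₂) x
      - ρ * R1 ρ k β μ x y₁ y₂ + x * y₁ = 0) :=
  stmt12_general ρ k σ β μ hρ hk hσ m y₁ y₂ x
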